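/- In a discounted MDP with k = 2 actions, if π ≺ π' are two policies, then S^π is not a subset of S^{π'}. -/

import Mathlib

/-- The transition matrix induced by a policy. -/
noncomputable def polMatrix {n k : ℕ} (P : Fin n → Fin k → Fin n → ℝ)
    (π : Fin n → Fin k) : Matrix (Fin n) (Fin n) ℝ :=
  Matrix.of fun s s' => P s (π s) s'

/-- The reward vector induced by a policy. -/
noncomputable def polReward {n k : ℕ} (r : Fin n → Fin k → ℝ)
    (π : Fin n → Fin k) : Fin n → ℝ :=
  fun s => r s (π s)

/-- The value vector of a policy: `v^π = ∑_{i=0}^∞ γ^i (P^π)^i r^π`. -/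
noncomputable def polValue {n k : ℕ} (P : Fin n → Fin k → Fin n → ℝ)
    (r : Fin n → Fin k → ℝ) (γ : ℝ) (π : Fin n → Fin k) : Fin n → ℝ :=
  ∑' i : ℕ, γ ^ i • (polMatrix P π ^ i).mulVec (polReward r π)

/-- `π ⪯ π'` : the policy `π'` dominates `π`. -/
def Dominates {n k : ℕ} (P : Fin n → Fin k → Fin n → ℝ) (r : Fin n → Fin k → ℝ)
    (γ : ℝ) (π π' : Fin n → Fin k) : Prop :=
  ∀ s, polValue P r γ π s ≤ polValue P r γ π' s

/-- `π ≺ π'` : the policy `π'` strictly dominates `π`. -/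
def StrictDominates {n k : ℕ} (P : Fin n → Fin k → Fin n → ℝ) (r : Fin n → Fin k → ℝ)
    (γ : ℝ) (π π' : Fin n → Fin k) : Prop :=
  Dominates P r γ π π' ∧ ∃ s, polValue P r γ π s < polValue P r γ π' s

/-- A set of state-action pairs is well-defined if it contains each state at most once. -/
def WellDefined {n k : ℕ} (U : Set (Fin n × Fin k)) : Prop :=
  ∀ s a a', (s, a) ∈ U → (s, a') ∈ U → a = a'

-- `π ⊕ U` : the policy obtained from `π` by switching the action at `s` to `a`
-- for each `(s, a) ∈ U` (intended for well-defined `U`).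
open Classical in
noncomputable def switch {n k : ℕ} (π : Fin n → Fin k) (U : Set (Fin n × Fin k)) :
    Fin n → Fin k :=
  fun s => if h : ∃ a, (s, a) ∈ U then h.choose else π s

/-- The improvement set `T^π = {(s,a) : π ⊕ {(s,a)} ≻ π}`. -/
def improvementSet {n k : ℕ} (P : Fin n → Fin k → Fin n → ℝ) (r : Fin n → Fin k → ℝ)
    (γ : ℝ) (π : Fin n → Fin k) : Set (Fin n × Fin k) :=
  {p | StrictDominates P r γ π (Function.update π p.1 p.2)}

/-- The set of improvement states `S^π`. -/
def improvementStates {n k : ℕ} (P : Fin n → Fin k → Fin n → ℝ) (r : Fin n → Fin k → ℝ)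
    (γ : ℝ) (π : Fin n → Fin k) : Set (Fin n) :=
  {s | ∃ a, (s, a) ∈ improvementSet P r γ π}

/-!
Suppose `S^π ⊆ S^π'` and let `σ` follow `π` on `S^π'` and `π'` elsewhere. Off `S^π'` no action
improves `π`, so every action of `σ` has nonpositive advantage with respect to `π`, and
`v^σ ≤ v^π`. On `S^π'`, since there are only two actions, `π s` is either `π' s` or the action
improving `π'`, so every action of `σ` has nonnegative advantage with respect to `π'`, and
`v^π' ≤ v^σ`. Hence `v^π' ≤ v^π`, contradicting `π ≺ π'`. Both comparisons come from the
performance-difference identity and a minimum principle for `w ≥ γ P w` with `P` row-stochastic.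
-/

open Matrix Finset

section RowStochastic

variable {ι : Type*} [Fintype ι] [DecidableEq ι] {M : Matrix ι ι ℝ}

theorem norm_mulVec_le_of_mem_rowStochastic (hM : M ∈ rowStochastic ℝ ι) (v : ι → ℝ) :
    ‖M *ᵥ v‖ ≤ ‖v‖ := by
  refine (pi_norm_le_iff_of_nonneg (norm_nonneg v)).2 fun i => ?_
  calc ‖(M *ᵥ v) i‖ ≤ ∑ j, ‖M i j * v j‖ := norm_sum_le _ _
    _ ≤ ∑ j, M i j * ‖v‖ := by
        gcongr with j
        rw [norm_mul, Real.norm_of_nonneg (nonneg_of_mem_rowStochastic hM)]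
        exact mul_le_mul_of_nonneg_left (norm_le_pi_norm v j) (nonneg_of_mem_rowStochastic hM)
    _ = ‖v‖ := by rw [← sum_mul, sum_row_of_mem_rowStochastic hM, one_mul]

theorem summable_geometric_smul_pow_mulVec {γ : ℝ} (hγ : |γ| < 1)
    (hM : M ∈ rowStochastic ℝ ι) (v : ι → ℝ) :
    Summable fun i : ℕ => γ ^ i • (M ^ i) *ᵥ v := by
  refine .of_norm_bounded ((summable_geometric_of_abs_lt_one hγ).abs.mul_right ‖v‖) fun i => ?_
  rw [norm_smul, Real.norm_eq_abs, abs_pow]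
  gcongr
  exact norm_mulVec_le_of_mem_rowStochastic (pow_mem hM i) v

theorem tsum_geometric_smul_pow_mulVec {γ : ℝ} (hγ : |γ| < 1)
    (hM : M ∈ rowStochastic ℝ ι) (v : ι → ℝ) :
    ∑' i : ℕ, γ ^ i • (M ^ i) *ᵥ v = v + γ • M *ᵥ ∑' i : ℕ, γ ^ i • (M ^ i) *ᵥ v := by
  have hsum := summable_geometric_smul_pow_mulVec hγ hM v
  let L : (ι → ℝ) →L[ℝ] ι → ℝ := LinearMap.toContinuousLinearMap (γ • M.mulVecLin)
  have hshift (i : ℕ) : γ ^ (i + 1) • (M ^ (i + 1)) *ᵥ v = L (γ ^ i • (M ^ i) *ᵥ v) := by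
    simp [L, pow_succ', ← mulVec_mulVec, mul_smul, smul_comm γ]
  conv_lhs => rw [hsum.tsum_eq_zero_add, tsum_congr hshift, ← L.map_tsum hsum]
  simp [L]

theorem nonneg_of_smul_mulVec_le {γ : ℝ} (hγ0 : 0 ≤ γ) (hγ1 : γ < 1)
    (hM : M ∈ rowStochastic ℝ ι) {w : ι → ℝ} (hw : ∀ i, γ * (M *ᵥ w) i ≤ w i) (i : ι) :
    0 ≤ w i := by
  have : Nonempty ι := ⟨i⟩
  obtain ⟨i₀, hi₀⟩ := Finite.exists_min w
  have hmean : w i₀ ≤ (M *ᵥ w) i₀ :=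
    calc w i₀ = ∑ j, M i₀ j * w i₀ := by rw [← sum_mul, sum_row_of_mem_rowStochastic hM, one_mul]
      _ ≤ ∑ j, M i₀ j * w j := by
          gcongr with j
          · exact nonneg_of_mem_rowStochastic hM
          · exact hi₀ j
  have : 0 ≤ w i₀ := by nlinarith [hw i₀, mul_le_mul_of_nonneg_left hmean hγ0]
  exact this.trans (hi₀ i)

end RowStochastic

section MDP

variable {n k : ℕ} {P : Fin n → Fin k → Fin n → ℝ} {r : Fin n → Fin k → ℝ} {γ : ℝ}

theorem polMatrix_mem_rowStochastic (hP0 : ∀ s a s', 0 ≤ P s a s')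
    (hP1 : ∀ s a, ∑ s', P s a s' = 1) (π : Fin n → Fin k) :
    polMatrix P π ∈ rowStochastic ℝ (Fin n) :=
  mem_rowStochastic_iff_sum.2 ⟨fun s s' => hP0 s (π s) s', fun s => hP1 s (π s)⟩

theorem polMatrix_mulVec_apply (π : Fin n → Fin k) (w : Fin n → ℝ) (s : Fin n) :
    (polMatrix P π *ᵥ w) s = ∑ s', P s (π s) s' * w s' :=
  rfl

theorem polValue_eq_polReward_add (hP0 : ∀ s a s', 0 ≤ P s a s')
    (hP1 : ∀ s a, ∑ s', P s a s' = 1) (hγ : |γ| < 1) (π : Fin n → Fin k) :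
    polValue P r γ π = polReward r π + γ • polMatrix P π *ᵥ polValue P r γ π :=
  tsum_geometric_smul_pow_mulVec hγ (polMatrix_mem_rowStochastic hP0 hP1 π) _

/-- The advantage `Q^τ(s, a) - v^τ(s)` of playing `a` once at `s` and following `τ` afterwards. -/
noncomputable def advantage (P : Fin n → Fin k → Fin n → ℝ) (r : Fin n → Fin k → ℝ) (γ : ℝ)
    (τ : Fin n → Fin k) (s : Fin n) (a : Fin k) : ℝ :=
  r s a + γ * ∑ s', P s a s' * polValue P r γ τ s' - polValue P r γ τ s

theorem advantage_self (hP0 : ∀ s a s', 0 ≤ P s a s') (hP1 : ∀ s a, ∑ s', P s a s' = 1)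
    (hγ : |γ| < 1) (τ : Fin n → Fin k) (s : Fin n) :
    advantage P r γ τ s (τ s) = 0 := by
  have := congrFun (polValue_eq_polReward_add (r := r) hP0 hP1 hγ τ) s
  simp only [Pi.add_apply, Pi.smul_apply, smul_eq_mul, polMatrix_mulVec_apply, polReward] at this
  rw [advantage, ← this, sub_self]

theorem advantage_update_apply (hP0 : ∀ s a s', 0 ≤ P s a s')
    (hP1 : ∀ s a, ∑ s', P s a s' = 1) (hγ : |γ| < 1) (τ : Fin n → Fin k) (s : Fin n)
    (a : Fin k) (s' : Fin n) :
    advantage P r γ τ s' (Function.update τ s a s') =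
      if s' = s then advantage P r γ τ s a else 0 := by
  rcases eq_or_ne s' s with rfl | hs
  · simp
  · simp [hs, advantage_self hP0 hP1 hγ]

/-- The performance-difference identity. -/
theorem polValue_sub_polValue (hP0 : ∀ s a s', 0 ≤ P s a s')
    (hP1 : ∀ s a, ∑ s', P s a s' = 1) (hγ : |γ| < 1) (σ τ : Fin n → Fin k) :
    polValue P r γ τ - polValue P r γ σ =
      (fun s => advantage P r γ σ s (τ s)) +
        γ • polMatrix P τ *ᵥ (polValue P r γ τ - polValue P r γ σ) := by
  funext s
  have := congrFun (polValue_eq_polReward_add (r := r) hP0 hP1 hγ τ) s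
  simp only [Pi.add_apply, Pi.sub_apply, Pi.smul_apply, smul_eq_mul,
    polMatrix_mulVec_apply] at this ⊢
  simp only [advantage, mul_sub, sum_sub_distrib, polReward] at this ⊢
  linarith

theorem dominates_of_advantage_nonneg (hP0 : ∀ s a s', 0 ≤ P s a s')
    (hP1 : ∀ s a, ∑ s', P s a s' = 1) (hγ0 : 0 ≤ γ) (hγ1 : γ < 1) {σ τ : Fin n → Fin k}
    (h : ∀ s, 0 ≤ advantage P r γ σ s (τ s)) : Dominates P r γ σ τ := by
  have hγ : |γ| < 1 := abs_lt.2 ⟨by linarith, hγ1⟩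
  have hdiff := polValue_sub_polValue (r := r) hP0 hP1 hγ σ τ
  refine fun s => sub_nonneg.1 <| nonneg_of_smul_mulVec_le hγ0 hγ1
    (polMatrix_mem_rowStochastic hP0 hP1 τ) (w := polValue P r γ τ - polValue P r γ σ)
    (fun s' => ?_) s
  have := congrFun hdiff s'
  simp only [Pi.add_apply, Pi.smul_apply, smul_eq_mul] at this
  linarith [h s']

theorem dominates_of_advantage_nonpos (hP0 : ∀ s a s', 0 ≤ P s a s')
    (hP1 : ∀ s a, ∑ s', P s a s' = 1) (hγ0 : 0 ≤ γ) (hγ1 : γ < 1) {σ τ : Fin n → Fin k}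
    (h : ∀ s, advantage P r γ σ s (τ s) ≤ 0) : Dominates P r γ τ σ := by
  have hγ : |γ| < 1 := abs_lt.2 ⟨by linarith, hγ1⟩
  have hdiff := polValue_sub_polValue (r := r) hP0 hP1 hγ σ τ
  refine fun s => sub_nonneg.1 <| nonneg_of_smul_mulVec_le hγ0 hγ1
    (polMatrix_mem_rowStochastic hP0 hP1 τ) (w := polValue P r γ σ - polValue P r γ τ)
    (fun s' => ?_) s
  have := congrFun hdiff s'
  rw [← neg_sub, mulVec_neg]
  simp only [Pi.add_apply, Pi.smul_apply, Pi.neg_apply, smul_eq_mul] at this ⊢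
  linarith [h s']

theorem mem_improvementSet_iff (hP0 : ∀ s a s', 0 ≤ P s a s')
    (hP1 : ∀ s a, ∑ s', P s a s' = 1) (hγ0 : 0 ≤ γ) (hγ1 : γ < 1) {τ : Fin n → Fin k}
    {p : Fin n × Fin k} :
    p ∈ improvementSet P r γ τ ↔ 0 < advantage P r γ τ p.1 p.2 := by
  have hγ : |γ| < 1 := abs_lt.2 ⟨by linarith, hγ1⟩
  obtain ⟨s, a⟩ := p
  simp only [improvementSet, Set.mem_ofPred_eq]
  constructor
  · rintro ⟨-, s₁, hlt⟩
    by_contra! hadv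
    have := dominates_of_advantage_nonpos (r := r) hP0 hP1 hγ0 hγ1 (σ := τ)
      (τ := Function.update τ s a) fun s' => by
        rw [advantage_update_apply hP0 hP1 hγ]; split_ifs <;> simp [hadv]
    exact (this s₁).not_gt hlt
  · intro hadv
    have hdom := dominates_of_advantage_nonneg (r := r) hP0 hP1 hγ0 hγ1 (σ := τ)
      (τ := Function.update τ s a) fun s' => by
        rw [advantage_update_apply hP0 hP1 hγ]; split_ifs <;> simp [hadv.le]
    refine ⟨hdom, s, ?_⟩
    have hnext := nonneg_mulVec_of_mem_rowStochastic
      (polMatrix_mem_rowStochastic hP0 hP1 (Function.update τ s a))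
      (x := polValue P r γ (Function.update τ s a) - polValue P r γ τ)
      (fun s' => sub_nonneg.2 (hdom s')) s
    have := congrFun (polValue_sub_polValue (r := r) hP0 hP1 hγ τ (Function.update τ s a)) s
    simp only [Pi.add_apply, Pi.sub_apply, Pi.smul_apply, smul_eq_mul,
      Function.update_self] at this
    nlinarith [mul_nonneg hγ0 hnext]

theorem advantage_nonpos_of_notMem_improvementStates (hP0 : ∀ s a s', 0 ≤ P s a s')
    (hP1 : ∀ s a, ∑ s', P s a s' = 1) (hγ0 : 0 ≤ γ) (hγ1 : γ < 1) {τ : Fin n → Fin k} {s : Fin n}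
    (hs : s ∉ improvementStates P r γ τ) (a : Fin k) : advantage P r γ τ s a ≤ 0 :=
  not_lt.1 fun h => hs ⟨a, (mem_improvementSet_iff hP0 hP1 hγ0 hγ1).2 h⟩

end MDP

section TwoActions

variable {n : ℕ} {P : Fin n → Fin 2 → Fin n → ℝ} {r : Fin n → Fin 2 → ℝ} {γ : ℝ}

/-- With two actions, an improvable state has only one alternative to `τ s`, and it improves. -/
theorem advantage_nonneg_of_mem_improvementStates (hP0 : ∀ s a s', 0 ≤ P s a s')
    (hP1 : ∀ s a, ∑ s', P s a s' = 1) (hγ0 : 0 ≤ γ) (hγ1 : γ < 1) {τ : Fin n → Fin 2}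
    {s : Fin n} (hs : s ∈ improvementStates P r γ τ) (a : Fin 2) :
    0 ≤ advantage P r γ τ s a := by
  have hγ : |γ| < 1 := abs_lt.2 ⟨by linarith, hγ1⟩
  obtain ⟨b, hb⟩ := hs
  have hb : 0 < advantage P r γ τ s b := (mem_improvementSet_iff hP0 hP1 hγ0 hγ1).1 hb
  rcases eq_or_ne a (τ s) with rfl | ha
  · rw [advantage_self hP0 hP1 hγ]
  · have hbτ : b ≠ τ s := by rintro rfl; simp [advantage_self hP0 hP1 hγ] at hb
    obtain rfl : a = b := by omega
    exact hb.le

theorem dominates_of_improvementStates_subset (hP0 : ∀ s a s', 0 ≤ P s a s')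
    (hP1 : ∀ s a, ∑ s', P s a s' = 1) (hγ0 : 0 ≤ γ) (hγ1 : γ < 1) {π π' : Fin n → Fin 2}
    (hsub : improvementStates P r γ π ⊆ improvementStates P r γ π') :
    Dominates P r γ π' π := by
  classical
  have hγ : |γ| < 1 := abs_lt.2 ⟨by linarith, hγ1⟩
  set σ := (improvementStates P r γ π').piecewise π π'
  have hσπ : Dominates P r γ σ π := by
    refine dominates_of_advantage_nonpos hP0 hP1 hγ0 hγ1 fun s => ?_
    by_cases hs : s ∈ improvementStates P r γ π'
    · simp [σ, hs, advantage_self hP0 hP1 hγ]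
    · simpa [σ, hs] using
        advantage_nonpos_of_notMem_improvementStates hP0 hP1 hγ0 hγ1 (mt (@hsub s) hs) (π' s)
  have hπ'σ : Dominates P r γ π' σ := by
    refine dominates_of_advantage_nonneg hP0 hP1 hγ0 hγ1 fun s => ?_
    by_cases hs : s ∈ improvementStates P r γ π'
    · simpa [σ, hs] using advantage_nonneg_of_mem_improvementStates hP0 hP1 hγ0 hγ1 hs (π s)
    · simp [σ, hs, advantage_self hP0 hP1 hγ]
  exact fun s => (hπ'σ s).trans (hσπ s)

end TwoActions

theorem improvement_states_not_subset_of_k2_general (n : ℕ)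
    (P : Fin n → Fin 2 → Fin n → ℝ) (r : Fin n → Fin 2 → ℝ) (γ : ℝ)
    (hP0 : ∀ s a s', 0 ≤ P s a s') (hP1 : ∀ s a, ∑ s', P s a s' = 1)
    (hγ0 : 0 ≤ γ) (hγ1 : γ < 1)
    (π π' : Fin n → Fin 2) (hlt : StrictDominates P r γ π π') :
    ¬ improvementStates P r γ π ⊆ improvementStates P r γ π' := by
  intro hsub
  obtain ⟨-, s, hs⟩ := hlt
  exact (dominates_of_improvementStates_subset hP0 hP1 hγ0 hγ1 hsub s).not_gt hs

theorem improvement_states_not_subset_of_k2 (n : ℕ) (hn : 1 ≤ n)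
    (P : Fin n → Fin 2 → Fin n → ℝ) (r : Fin n → Fin 2 → ℝ) (γ : ℝ)
    (hP0 : ∀ s a s', 0 ≤ P s a s') (hP1 : ∀ s a, ∑ s', P s a s' = 1)
    (hγ0 : 0 ≤ γ) (hγ1 : γ < 1)
    (π π' : Fin n → Fin 2) (hlt : StrictDominates P r γ π π') :
    ¬ improvementStates P r γ π ⊆ improvementStates P r γ π' :=
  improvement_states_not_subset_of_k2_general n P r γ hP0 hP1 hγ0 hγ1 π π' hlt
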